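/- Let E₁ ∈ ℝ^{d''×d} and E₂ ∈ ℝ^{d'×d''} be column-stochastic matrices each with all entries positive. Then the composition E₂E₁ ∈ ℝ^{d'×d} has all entries positive; consequently, for every pair of probability vectors p ∈ Δ^{d-1} and q ∈ Δ^{d'-1} there exists a prior γ ∈ Δ^{d-1} with (E₂E₁)γ entrywise positive such that the Bayes map of E₂E₁ based on γ sends q to p. -/

import Mathlib

/-!
The prior is found variationally. Since `E` is entrywise positive, the potential
`Φ(γ) = ∏ₓ γₓ ^ pₓ / ∏ᵧ (E γ)ᵧ ^ qᵧ` is continuous on the simplex, so it attains a maximum at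
some `γ`; as `Φ(p) > 0`, the maximizer is positive on the support of `p`. Differentiating `log Φ`
along the segment from `γ` towards a vertex `eₓ` shows `pₓ ≤ (Ê_γ q)ₓ` for every `x`, and since
both sides are probability vectors, equality holds.
-/

open Matrix BigOperators

/-- A column-stochastic matrix: nonnegative entries, each column sums to 1. -/
def ColStochastic {d' d : ℕ} (E : Matrix (Fin d') (Fin d) ℝ) : Prop :=
  (∀ y x, 0 ≤ E y x) ∧ ∀ x, ∑ y, E y x = 1

/-- A probability vector: nonnegative entries summing to 1. -/
def ProbVec {d : ℕ} (p : Fin d → ℝ) : Prop :=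
  (∀ x, 0 ≤ p x) ∧ ∑ x, p x = 1

/-- The Bayes map `Ê_γ = D_γ Eᵀ D_{Eγ}⁻¹`, entrywise `(Ê_γ)_{x,y} = E_{y,x} γ_x / (Eγ)_y`. -/
noncomputable def bayesMap {d' d : ℕ} (E : Matrix (Fin d') (Fin d) ℝ) (γ : Fin d → ℝ) :
    Matrix (Fin d) (Fin d') ℝ :=
  Matrix.of fun x y => E y x * γ x / (E *ᵥ γ) y

open Finset Real Set

section Potential

variable {ι κ : Type*} [Fintype ι]

lemma exists_pos_of_mem_stdSimplex {w : ι → ℝ} (hw : w ∈ stdSimplex ℝ ι) : ∃ x, 0 < w x := by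
  by_contra! h
  have : ∑ x, w x ≤ 0 := sum_nonpos fun x _ => h x
  linarith [hw.2]

lemma mulVec_pos_of_mem_stdSimplex {E : Matrix κ ι ℝ} (hE : ∀ y x, 0 < E y x) {w : ι → ℝ}
    (hw : w ∈ stdSimplex ℝ ι) (y : κ) : 0 < (E *ᵥ w) y := by
  obtain ⟨x, hx⟩ := exists_pos_of_mem_stdSimplex hw
  exact sum_pos' (fun i _ => mul_nonneg (hE y i).le (hw.1 i))
    ⟨x, mem_univ x, mul_pos (hE y x) hx⟩

variable [Fintype κ]

noncomputable def bayesPotential (E : Matrix κ ι ℝ) (p : ι → ℝ) (q : κ → ℝ) (w : ι → ℝ) : ℝ :=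
  (∏ x, w x ^ p x) / ∏ y, (E *ᵥ w) y ^ q y

noncomputable def logBayesPotential (E : Matrix κ ι ℝ) (p : ι → ℝ) (q : κ → ℝ) (w : ι → ℝ) :
    ℝ :=
  ∑ x, p x * log (w x) - ∑ y, q y * log ((E *ᵥ w) y)

lemma rpow_eq_exp_mul_log {a b : ℝ} (h : 0 < a ∨ b = 0) : a ^ b = exp (b * log a) := by
  rcases h with ha | rfl
  · rw [rpow_def_of_pos ha, mul_comm]
  · simp

lemma bayesPotential_eq_exp_logBayesPotential {E : Matrix κ ι ℝ} {p : ι → ℝ} {q : κ → ℝ}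
    {w : ι → ℝ} (hp : ∀ x, 0 ≤ p x) (hw : ∀ x, 0 < p x → 0 < w x)
    (hEw : ∀ y, 0 < (E *ᵥ w) y) :
    bayesPotential E p q w = exp (logBayesPotential E p q w) := by
  have hnum (x : ι) : w x ^ p x = exp (p x * log (w x)) :=
    rpow_eq_exp_mul_log ((hp x).lt_or_eq.imp (hw x) Eq.symm)
  have hden (y : κ) : (E *ᵥ w) y ^ q y = exp (q y * log ((E *ᵥ w) y)) :=
    rpow_eq_exp_mul_log (Or.inl (hEw y))
  simp only [bayesPotential, logBayesPotential, exp_sub, exp_sum, hnum, hden]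

lemma continuousOn_bayesPotential {E : Matrix κ ι ℝ} (hE : ∀ y x, 0 < E y x) {p : ι → ℝ}
    {q : κ → ℝ} (hp : ∀ x, 0 ≤ p x) (hq : ∀ y, 0 ≤ q y) :
    ContinuousOn (bayesPotential E p q) (stdSimplex ℝ ι) := by
  have hEw : Continuous fun w : ι → ℝ => E *ᵥ w := continuous_const.matrix_mulVec continuous_id
  refine ContinuousOn.div ?_ ?_ fun w hw => ?_
  · exact (continuous_finsetProd _ fun x _ =>
      (continuous_apply x).rpow_const fun _ => Or.inr (hp x)).continuousOn
  · exact (continuous_finsetProd _ fun y _ =>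
      ((continuous_apply y).comp hEw).rpow_const fun _ => Or.inr (hq y)).continuousOn
  · exact prod_ne_zero_iff.2 fun y _ =>
      (rpow_pos_of_pos (mulVec_pos_of_mem_stdSimplex hE hw y) _).ne'

lemma exists_isMaxOn_bayesPotential {E : Matrix κ ι ℝ} (hE : ∀ y x, 0 < E y x) {p : ι → ℝ}
    {q : κ → ℝ} (hp : p ∈ stdSimplex ℝ ι) (hq : ∀ y, 0 ≤ q y) :
    ∃ γ ∈ stdSimplex ℝ ι, IsMaxOn (bayesPotential E p q) (stdSimplex ℝ ι) γ ∧
      ∀ x, 0 < p x → 0 < γ x := by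
  obtain ⟨γ, hγ, hmax⟩ := (isCompact_stdSimplex ℝ ι).exists_isMaxOn ⟨p, hp⟩
    (continuousOn_bayesPotential hE hp.1 hq)
  refine ⟨γ, hγ, hmax, fun x hx => (hγ.1 x).lt_of_ne' fun hγx => ?_⟩
  have hpos : 0 < bayesPotential E p q p := by
    rw [bayesPotential_eq_exp_logBayesPotential hp.1 (fun _ h => h)
      (mulVec_pos_of_mem_stdSimplex hE hp)]
    exact exp_pos _
  have hzero : bayesPotential E p q γ = 0 :=
    div_eq_zero_iff.2 (Or.inl (prod_eq_zero (mem_univ x) (by rw [hγx, zero_rpow hx.ne'])))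
  exact (hpos.trans_le (hmax hp)).ne' hzero

lemma hasDerivAt_mul_log_add_mul {c a b : ℝ} (h : a ≠ 0 ∨ c = 0) :
    HasDerivAt (fun t => c * log (a + t * b)) (c * b / a) 0 := by
  rcases h with ha | rfl
  · have := (((hasDerivAt_id (0 : ℝ)).mul_const b).const_add a).log (by simpa using ha)
    simpa [mul_div_assoc] using this.const_mul c
  · simpa using hasDerivAt_const (0 : ℝ) (0 : ℝ)

lemma hasDerivAt_logBayesPotential_add_smul {E : Matrix κ ι ℝ} {p : ι → ℝ} {q : κ → ℝ}
    {w : ι → ℝ} (hp : ∀ x, 0 ≤ p x) (hw : ∀ x, 0 < p x → 0 < w x)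
    (hEw : ∀ y, 0 < (E *ᵥ w) y) (u : ι → ℝ) :
    HasDerivAt (fun t : ℝ => logBayesPotential E p q (w + t • u))
      (∑ x, p x * u x / w x - ∑ y, q y * (E *ᵥ u) y / (E *ᵥ w) y) 0 := by
  simp only [logBayesPotential, mulVec_add, mulVec_smul, Pi.add_apply, Pi.smul_apply,
    smul_eq_mul]
  exact (HasDerivAt.fun_sum fun x _ => hasDerivAt_mul_log_add_mul
      ((hp x).lt_or_eq.imp (fun h => (hw x h).ne') Eq.symm)).sub
    (HasDerivAt.fun_sum fun y _ => hasDerivAt_mul_log_add_mul (Or.inl (hEw y).ne'))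

end Potential

lemma HasDerivAt.nonpos_of_isLocalMaxOn_Ici {f : ℝ → ℝ} {f' a : ℝ} (hf : HasDerivAt f f' a)
    (hmax : IsLocalMaxOn f (Ici a) a) : f' ≤ 0 := by
  have hcone : (1 : ℝ) ∈ posTangentConeAt (Ici a) a :=
    mem_posTangentConeAt_of_segment_subset
      ((segment_eq_Icc (by linarith)).subset.trans Icc_subset_Ici_self)
  simpa using hmax.hasFDerivWithinAt_nonpos hf.hasFDerivAt.hasFDerivWithinAt hcone

lemma mul_div_cancel_of_imp_pos {a b : ℝ} (ha : 0 ≤ a) (h : 0 < a → 0 < b) :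
    b * (a / b) = a := by
  rcases ha.lt_or_eq with ha | rfl
  · exact mul_div_cancel₀ _ (h ha).ne'
  · simp

section Bayes

variable {m n : ℕ} {E : Matrix (Fin m) (Fin n) ℝ} {p γ : Fin n → ℝ} {q : Fin m → ℝ}

lemma bayesMap_mulVec_apply (E : Matrix (Fin m) (Fin n) ℝ) (γ : Fin n → ℝ) (q : Fin m → ℝ)
    (x : Fin n) : (bayesMap E γ *ᵥ q) x = γ x * ∑ y, q y * E y x / (E *ᵥ γ) y := by
  simp only [bayesMap, mulVec, dotProduct, of_apply, mul_sum]
  exact sum_congr rfl fun y _ => by ring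

lemma sum_bayesMap_mulVec (hEγ : ∀ y, (E *ᵥ γ) y ≠ 0) :
    ∑ x, (bayesMap E γ *ᵥ q) x = ∑ y, q y := by
  simp only [bayesMap_mulVec_apply, mul_sum]
  rw [sum_comm]
  refine sum_congr rfl fun y _ => ?_
  calc ∑ x, γ x * (q y * E y x / (E *ᵥ γ) y) = q y / (E *ᵥ γ) y * ∑ x, E y x * γ x := by
        rw [mul_sum]; exact sum_congr rfl fun x _ => by ring
    _ = q y := div_mul_cancel₀ _ (hEγ y)

lemma hasDerivAt_logBayesPotential_toward_single (hE : ∀ y x, 0 < E y x)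
    (hp : p ∈ stdSimplex ℝ (Fin n)) (hq : q ∈ stdSimplex ℝ (Fin m))
    (hγ : γ ∈ stdSimplex ℝ (Fin n)) (hsupp : ∀ x, 0 < p x → 0 < γ x) (x : Fin n) :
    HasDerivAt (fun t : ℝ => logBayesPotential E p q (γ + t • (Pi.single x 1 - γ)))
      (p x / γ x - ∑ y, q y * E y x / (E *ᵥ γ) y) 0 := by
  have hEγ := mulVec_pos_of_mem_stdSimplex hE hγ
  convert hasDerivAt_logBayesPotential_add_smul hp.1 hsupp hEγ (Pi.single x 1 - γ) using 1
  have hpγ (z : Fin n) : p z * γ z / γ z = p z := by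
    rw [mul_div_right_comm, mul_comm, mul_div_cancel_of_imp_pos (hp.1 z) (hsupp z)]
  have hqE (y : Fin m) : q y * (E *ᵥ γ) y / (E *ᵥ γ) y = q y :=
    mul_div_cancel_right₀ _ (hEγ y).ne'
  simp only [mulVec_sub, mulVec_single_one, col_apply, Pi.sub_apply, mul_sub, sub_div,
    sum_sub_distrib, hpγ, hqE, hp.2, hq.2, Pi.single_apply, mul_ite, mul_one, mul_zero,
    ite_div, zero_div, sum_ite_eq']
  rw [if_pos (Finset.mem_univ x)]
  ring

lemma le_bayesMap_mulVec_of_isMaxOn (hE : ∀ y x, 0 < E y x) (hp : p ∈ stdSimplex ℝ (Fin n))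
    (hq : q ∈ stdSimplex ℝ (Fin m)) (hγ : γ ∈ stdSimplex ℝ (Fin n))
    (hmax : IsMaxOn (bayesPotential E p q) (stdSimplex ℝ (Fin n)) γ)
    (hsupp : ∀ x, 0 < p x → 0 < γ x) (x : Fin n) : p x ≤ (bayesMap E γ *ᵥ q) x := by
  have hlocmax : IsLocalMaxOn
      (fun t : ℝ => logBayesPotential E p q (γ + t • (Pi.single x 1 - γ))) (Ici 0) 0 := by
    -- for `t < 1` the point stays positive on the support of `p`, so `Φ = exp (log Φ)` there
    filter_upwards [Ico_mem_nhdsGE zero_lt_one] with t ht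
    have hmem : γ + t • (Pi.single x 1 - γ) ∈ stdSimplex ℝ (Fin n) :=
      (convex_stdSimplex ℝ _).add_smul_sub_mem hγ (single_mem_stdSimplex ℝ x)
        (Ico_subset_Icc_self ht)
    have hsupp' (z : Fin n) (hz : 0 < p z) : 0 < (γ + t • (Pi.single x 1 - γ) : Fin n → ℝ) z := by
      have h1 : 0 ≤ (Pi.single x (1 : ℝ) : Fin n → ℝ) z := (single_mem_stdSimplex ℝ x).1 z
      have h2 : 0 < (1 - t) * γ z := mul_pos (by linarith [ht.2]) (hsupp z hz)
      simp only [Pi.add_apply, Pi.smul_apply, Pi.sub_apply, smul_eq_mul]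
      nlinarith [ht.1]
    simp only [zero_smul, add_zero]
    rw [← exp_le_exp,
      ← bayesPotential_eq_exp_logBayesPotential hp.1 hsupp' (mulVec_pos_of_mem_stdSimplex hE hmem),
      ← bayesPotential_eq_exp_logBayesPotential hp.1 hsupp (mulVec_pos_of_mem_stdSimplex hE hγ)]
    exact hmax hmem
  have hderiv := HasDerivAt.nonpos_of_isLocalMaxOn_Ici
    (hasDerivAt_logBayesPotential_toward_single hE hp hq hγ hsupp x) hlocmax
  rw [bayesMap_mulVec_apply, ← mul_div_cancel_of_imp_pos (hp.1 x) (hsupp x)]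
  exact mul_le_mul_of_nonneg_left (by linarith) (hγ.1 x)

theorem exists_bayesMap_mulVec_eq (hE : ∀ y x, 0 < E y x) (hp : ProbVec p) (hq : ProbVec q) :
    ∃ γ : Fin n → ℝ, ProbVec γ ∧ (∀ y, 0 < (E *ᵥ γ) y) ∧ bayesMap E γ *ᵥ q = p := by
  obtain ⟨γ, hγ, hmax, hsupp⟩ := exists_isMaxOn_bayesPotential hE hp hq.1
  have hEγ := mulVec_pos_of_mem_stdSimplex hE hγ
  have hle := le_bayesMap_mulVec_of_isMaxOn hE hp hq hγ hmax hsupp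
  have hsum : ∑ x, p x = ∑ x, (bayesMap E γ *ᵥ q) x := by
    rw [sum_bayesMap_mulVec fun y => (hEγ y).ne', hp.2, hq.2]
  refine ⟨γ, hγ, hEγ, funext fun x => ?_⟩
  exact ((sum_eq_sum_iff_of_le fun x _ => hle x).1 hsum x (mem_univ x)).symm

end Bayes

lemma Matrix.mul_apply_pos {R l o n : Type*} [Fintype o] [Nonempty o] [Semiring R]
    [PartialOrder R] [IsStrictOrderedRing R] {A : Matrix l o R} {B : Matrix o n R}
    (hA : ∀ i k, 0 < A i k) (hB : ∀ k j, 0 < B k j) (i : l) (j : n) : 0 < (A * B) i j :=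
  sum_pos (fun k _ => mul_pos (hA i k) (hB k j)) univ_nonempty

theorem concatenation_prior_hackable_general {d d' d'' : ℕ}
    (E₁ : Matrix (Fin d'') (Fin d) ℝ) (E₂ : Matrix (Fin d') (Fin d'') ℝ)
    (hE₁ : ColStochastic E₁)
    (hE₁pos : ∀ z x, 0 < E₁ z x) (hE₂pos : ∀ y z, 0 < E₂ y z) :
    (∀ y x, 0 < (E₂ * E₁) y x) ∧
    (∀ (p : Fin d → ℝ) (q : Fin d' → ℝ), ProbVec p → ProbVec q →
      ∃ γ : Fin d → ℝ, ProbVec γ ∧ (∀ y, 0 < ((E₂ * E₁) *ᵥ γ) y) ∧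
        (bayesMap (E₂ * E₁) γ) *ᵥ q = p) := by
  have hpos (y : Fin d') (x : Fin d) : 0 < (E₂ * E₁) y x := by
    have : Nonempty (Fin d'') :=
      univ_nonempty_iff.1 (nonempty_of_sum_ne_zero ((hE₁.2 x).symm ▸ one_ne_zero))
    exact mul_apply_pos hE₂pos hE₁pos y x
  exact ⟨hpos, fun p q hp hq => exists_bayesMap_mulVec_eq hpos hp hq⟩

theorem concatenation_prior_hackable {d d' d'' : ℕ}
    (E₁ : Matrix (Fin d'') (Fin d) ℝ) (E₂ : Matrix (Fin d') (Fin d'') ℝ)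
    (hE₁ : ColStochastic E₁) (hE₂ : ColStochastic E₂)
    (hE₁pos : ∀ z x, 0 < E₁ z x) (hE₂pos : ∀ y z, 0 < E₂ y z) :
    (∀ y x, 0 < (E₂ * E₁) y x) ∧
    (∀ (p : Fin d → ℝ) (q : Fin d' → ℝ), ProbVec p → ProbVec q →
      ∃ γ : Fin d → ℝ, ProbVec γ ∧ (∀ y, 0 < ((E₂ * E₁) *ᵥ γ) y) ∧
        (bayesMap (E₂ * E₁) γ) *ᵥ q = p) :=
  concatenation_prior_hackable_general E₁ E₂ hE₁ hE₁pos hE₂pos
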